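/- Let F̂(z) = Mz + G(z) be a C¹ lift of a torus map with G of class C¹, satisfying the expanding-block assumption with k = 1 (P∘M = m·P for an integer m with |m| > 1) and admitting an invariant expanding cone structure with constants α > 0 and K > 1 centered on the first coordinate direction. Let Φ̂(z) = lim_{n→∞} m^{−n} P(F̂^n(z)) and define Ĥ: ℝ^d → ℝ × ℝ^{d−1} ≅ ℝ^d by Ĥ(z) = (Φ̂(z), Qz). Then Ĥ is a homeomorphism of ℝ^d, it satisfies Ĥ(z + p) = Ĥ(z) + (p₁, Qp) for all p ∈ ℤ^d, and the conjugated map Ĥ∘F̂∘Ĥ^{−1} has the skew-product form (x, y) ↦ (m·x, g(x,y)) for some continuous g: ℝ × ℝ^{d−1} → ℝ^{d−1}. Hence the induced torus map is topologically conjugate to a skew product over the expanding circle map x ↦ mx mod 1. -/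

import Mathlib

/-!
Write `ℓ z = z₀`. Since `ℓ ∘ F̂ - m ℓ = ℓ ∘ G` is bounded by `C = sup ‖G‖`, a geometric
series gives `|Φ̂ - ℓ| ≤ C`; together with `Φ̂ ∘ F̂ = m Φ̂` this makes `m⁻ⁿ ℓ ∘ F̂ⁿ → Φ̂`
uniform, so `Φ̂` is continuous. If two points of a line `{Qz = y}` had the same `Φ̂`, the first
coordinates of their orbits would stay `2C`-close; but the segment joining them lies in the
cone, so by the mean value theorem that distance grows like `Kⁿ`. Hence `t ↦ Φ̂(t, y)` is a
continuous injection at bounded distance from the identity, i.e. an increasing bijection of `ℝ`,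
and its inverse depends continuously on `(x, y)`: `Ĥ` is a homeomorphism. As `M` is integral
and `G` periodic, `F̂` maps `z + p` to `F̂ z` plus a lattice vector with first coordinate `m p₀`,
so `Φ̂(z + p) = Φ̂ z + p₀`, and `Ĥ`, `F̂` descend to the tori.
-/

open Filter Topology

noncomputable section

/-- Reinterpret a vector `Fin d → ℝ` as a point of Euclidean space `ℝ^d`. -/
def toEuc (d : ℕ) (v : Fin d → ℝ) : EuclideanSpace ℝ (Fin d) := WithLp.toLp 2 v

/-- The canonical projection `ℝ^n → ℝ^n/ℤ^n` (the `n`-torus), coordinatewise `mod 1`. -/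
def torusProj (n : ℕ) (z : EuclideanSpace ℝ (Fin n)) : Fin n → AddCircle (1 : ℝ) :=
  fun i => ((z i : ℝ) : AddCircle (1 : ℝ))

/-- Projection onto the last `d - k` coordinates of `ℝ^d`. -/
def projQ (d k : ℕ) (h : k ≤ d) (z : EuclideanSpace ℝ (Fin d)) :
    EuclideanSpace ℝ (Fin (d - k)) :=
  WithLp.toLp 2 fun j => z ⟨k + j.val, by have := j.isLt; omega⟩

open Function

lemma abs_sub_le_of_tendsto_inv_pow_mul {u : ℕ → ℝ} {m C L : ℝ} (hm : 2 ≤ |m|)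
    (hu : ∀ n, |u (n + 1) - m * u n| ≤ C)
    (hL : Tendsto (fun n => (m ^ n)⁻¹ * u n) atTop (𝓝 L)) : |L - u 0| ≤ C := by
  have hm0 : m ≠ 0 := by rintro rfl; norm_num at hm
  have hC : 0 ≤ C := (abs_nonneg _).trans (hu 0)
  have hstep : ∀ n, dist ((m ^ n)⁻¹ * u n) ((m ^ (n + 1))⁻¹ * u (n + 1)) ≤ C / 2 / 2 ^ n := by
    intro n
    have hdiff : (m ^ n)⁻¹ * u n - (m ^ (n + 1))⁻¹ * u (n + 1)
        = -((m ^ (n + 1))⁻¹ * (u (n + 1) - m * u n)) := by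
      field_simp
      ring
    rw [Real.dist_eq, hdiff, abs_neg, abs_mul, abs_inv, abs_pow]
    calc (|m| ^ (n + 1))⁻¹ * |u (n + 1) - m * u n| ≤ (2 ^ (n + 1))⁻¹ * C := by
          gcongr; exact hu n
      _ = C / 2 / 2 ^ n := by ring
  simpa [Real.dist_eq, abs_sub_comm] using dist_le_of_le_geometric_two_of_tendsto₀ hstep hL

lemma mul_sub_le_abs_sub_of_le_abs_deriv {f f' : ℝ → ℝ} {c a b : ℝ}
    (hf : ∀ t, HasDerivAt f (f' t) t) (hc : ∀ t, c ≤ |f' t|) (hab : a < b) :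
    c * (b - a) ≤ |f b - f a| := by
  obtain ⟨ξ, -, hξ⟩ := exists_hasDerivAt_eq_slope f f' hab
    (fun t _ => (hf t).continuousAt.continuousWithinAt) (fun t _ => hf t)
  have hba : 0 < b - a := sub_pos.2 hab
  calc c * (b - a) ≤ |f' ξ| * (b - a) := by gcongr; exact hc ξ
    _ = |f b - f a| := by rw [hξ, abs_div, abs_of_pos hba, div_mul_cancel₀ _ hba.ne']

lemma eq_zero_of_forall_pow_mul_abs_le {K a B : ℝ} (hK : 1 < K)
    (h : ∀ n : ℕ, K ^ n * |a| ≤ B) : a = 0 := by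
  by_contra ha
  obtain ⟨n, hn⟩ := ((tendsto_pow_atTop_atTop_of_one_lt hK).eventually_gt_atTop (B / |a|)).exists
  rw [div_lt_iff₀ (abs_pos.2 ha)] at hn
  linarith [h n]

lemma two_le_abs_intCast {m : ℤ} (hm : 1 < |m|) : (2 : ℝ) ≤ |(m : ℝ)| := by
  rw [← Int.cast_abs]
  exact_mod_cast hm

section Fiberwise

variable {C : ℝ} {f : ℝ → ℝ}

lemma surjective_of_abs_sub_le (hf : Continuous f) (hC : ∀ t, |f t - t| ≤ C) :
    Surjective f := by
  refine hf.surjective ?_ ?_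
  · refine tendsto_atTop_mono (fun t => ?_) (tendsto_atTop_add_const_right _ (-C) tendsto_id)
    show t + -C ≤ f t
    linarith [(abs_le.1 (hC t)).1]
  · refine tendsto_atBot_mono (fun t => ?_) (tendsto_atBot_add_const_right _ C tendsto_id)
    show f t ≤ t + C
    linarith [(abs_le.1 (hC t)).2]

lemma strictMono_of_injective_of_abs_sub_le (hf : Continuous f) (hinj : Injective f)
    (hC : ∀ t, |f t - t| ≤ C) : StrictMono f := by
  refine (hf.strictMono_of_inj hinj).resolve_right fun hanti => ?_
  have hC0 : 0 ≤ C := (abs_nonneg _).trans (hC 0)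
  have hlt : f (|f 0| + C + 1) < f 0 := hanti (by positivity)
  linarith [(abs_le.1 (hC (|f 0| + C + 1))).1, le_abs_self (f 0)]

lemma continuous_of_strictMono_of_apply_eq {Y : Type*} [TopologicalSpace Y] {g : ℝ × Y → ℝ}
    (hg : Continuous g) (hmono : ∀ y, StrictMono fun t => g (t, y)) {ψ : ℝ × Y → ℝ}
    (hψ : ∀ w, g (ψ w, w.2) = w.1) : Continuous ψ := by
  refine continuous_iff_continuousAt.2 fun w₀ => tendsto_order.2 ⟨fun a ha => ?_, fun b hb => ?_⟩
  · have hopen : IsOpen {w : ℝ × Y | g (a, w.2) < w.1} :=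
      isOpen_lt (hg.comp (continuous_const.prodMk continuous_snd)) continuous_fst
    have hw₀ : g (a, w₀.2) < w₀.1 := hψ w₀ ▸ hmono w₀.2 ha
    filter_upwards [hopen.mem_nhds hw₀] with w hw
    exact (hmono w.2).lt_iff_lt.1 (hψ w ▸ hw)
  · have hopen : IsOpen {w : ℝ × Y | w.1 < g (b, w.2)} :=
      isOpen_lt continuous_fst (hg.comp (continuous_const.prodMk continuous_snd))
    have hw₀ : w₀.1 < g (b, w₀.2) := hψ w₀ ▸ hmono w₀.2 hb
    filter_upwards [hopen.mem_nhds hw₀] with w hw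
    exact (hmono w.2).lt_iff_lt.1 (hψ w ▸ hw)

lemma exists_homeomorph_prod_fiberwise {Y : Type*} [TopologicalSpace Y] {g : ℝ × Y → ℝ}
    (hg : Continuous g) (hC : ∀ w, |g w - w.1| ≤ C) (hinj : ∀ y, Injective fun t => g (t, y)) :
    ∃ H : ℝ × Y ≃ₜ ℝ × Y, ∀ w, H w = (g w, w.2) := by
  have hcont : ∀ y, Continuous fun t => g (t, y) :=
    fun y => hg.comp (continuous_id.prodMk continuous_const)
  choose ψ hψ using fun w : ℝ × Y =>
    surjective_of_abs_sub_le (hcont w.2) (fun t => hC (t, w.2)) w.1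
  have hψcont : Continuous ψ := continuous_of_strictMono_of_apply_eq hg
    (fun y => strictMono_of_injective_of_abs_sub_le (hcont y) (hinj y) fun t => hC (t, y)) hψ
  refine ⟨{ toFun := fun w => (g w, w.2)
            invFun := fun w => (ψ w, w.2)
            left_inv := fun w => Prod.ext (hinj w.2 (hψ (g w, w.2))) rfl
            right_inv := fun w => Prod.ext (hψ w) rfl
            continuous_toFun := hg.prodMk continuous_snd
            continuous_invFun := hψcont.prodMk continuous_snd }, fun w => rfl⟩

lemma exists_homeomorph_prod_of_injective {X Y : Type*} [TopologicalSpace X]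
    [TopologicalSpace Y] (e : X ≃ₜ ℝ × Y) {Φ : X → ℝ} (hΦ : Continuous Φ)
    (hC : ∀ x, |Φ x - (e x).1| ≤ C) (hinj : ∀ x x', (e x).2 = (e x').2 → Φ x = Φ x' → x = x') :
    ∃ H : X ≃ₜ ℝ × Y, ∀ x, H x = (Φ x, (e x).2) := by
  obtain ⟨H, hH⟩ := exists_homeomorph_prod_fiberwise (g := Φ ∘ e.symm)
    (hΦ.comp e.symm.continuous) (fun w => by simpa using hC (e.symm w))
    fun y t t' h => by simpa using congrArg Prod.fst (e.symm.injective (hinj _ _ (by simp) h))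
  exact ⟨e.trans H, fun x => by simp [hH]⟩

end Fiberwise

section Semiconj

variable {X : Type*} {F : X → X} {ℓ Φ : X → ℝ} {m : ℝ}
  (hΦ : ∀ x, Tendsto (fun n : ℕ => (m ^ n)⁻¹ * ℓ (F^[n] x)) atTop (𝓝 (Φ x)))
include hΦ

lemma apply_map_eq_mul_of_tendsto (hm : m ≠ 0) (x : X) : Φ (F x) = m * Φ x := by
  refine tendsto_nhds_unique (hΦ (F x)) ?_
  have hshift : ∀ n : ℕ,
      (m ^ n)⁻¹ * ℓ (F^[n] (F x)) = m * ((m ^ (n + 1))⁻¹ * ℓ (F^[n + 1] x)) := by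
    intro n
    rw [iterate_succ_apply, pow_succ]
    field_simp
  simp only [hshift]
  exact ((hΦ x).comp (tendsto_add_atTop_nat 1)).const_mul m

lemma apply_iterate_eq_pow_mul_of_tendsto (hm : m ≠ 0) (n : ℕ) (x : X) :
    Φ (F^[n] x) = m ^ n * Φ x := by
  induction n with
  | zero => simp
  | succ n ih =>
    rw [iterate_succ_apply', apply_map_eq_mul_of_tendsto hΦ hm, ih, pow_succ, mul_comm _ m,
      mul_assoc]

lemma apply_eq_add_of_tendsto (hm : m ≠ 0) {x x' : X} {c : ℝ}
    (h : ∀ n, ℓ (F^[n] x') = ℓ (F^[n] x) + m ^ n * c) : Φ x' = Φ x + c := by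
  refine tendsto_nhds_unique (hΦ x') ?_
  have hsplit : ∀ n : ℕ, (m ^ n)⁻¹ * ℓ (F^[n] x') = (m ^ n)⁻¹ * ℓ (F^[n] x) + c := by
    intro n
    rw [h, mul_add, inv_mul_cancel_left₀ (pow_ne_zero n hm)]
  simpa only [hsplit] using (hΦ x).add_const c

variable {C : ℝ} (hm : 2 ≤ |m|) (hstep : ∀ x, |ℓ (F x) - m * ℓ x| ≤ C)
include hm hstep

lemma abs_sub_le_of_tendsto (x : X) : |Φ x - ℓ x| ≤ C := by
  simpa using abs_sub_le_of_tendsto_inv_pow_mul hm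
    (fun n => by simpa only [iterate_succ_apply'] using hstep (F^[n] x)) (hΦ x)

lemma tendstoUniformly_of_tendsto :
    TendstoUniformly (fun (n : ℕ) x => (m ^ n)⁻¹ * ℓ (F^[n] x)) Φ atTop := by
  have hm0 : m ≠ 0 := by rintro rfl; norm_num at hm
  have hrate : ∀ n x, |Φ x - (m ^ n)⁻¹ * ℓ (F^[n] x)| ≤ C * (|m|⁻¹) ^ n := by
    intro n x
    have h := abs_sub_le_of_tendsto hΦ hm hstep (F^[n] x)
    rw [apply_iterate_eq_pow_mul_of_tendsto hΦ hm0] at h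
    calc |Φ x - (m ^ n)⁻¹ * ℓ (F^[n] x)| = |(m ^ n)⁻¹| * |m ^ n * Φ x - ℓ (F^[n] x)| := by
          rw [← abs_mul, mul_sub, inv_mul_cancel_left₀ (pow_ne_zero n hm0)]
      _ ≤ (|m|⁻¹) ^ n * C := by rw [abs_inv, abs_pow, inv_pow]; gcongr
      _ = C * (|m|⁻¹) ^ n := mul_comm _ _
  have hlim : Tendsto (fun n : ℕ => C * (|m|⁻¹) ^ n) atTop (𝓝 0) := by
    simpa using (tendsto_pow_atTop_nhds_zero_of_lt_one (by positivity)
      (inv_lt_one_of_one_lt₀ (by linarith))).const_mul C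
  refine Metric.tendstoUniformly_iff.2 fun ε hε => ?_
  filter_upwards [hlim.eventually (gt_mem_nhds hε)] with n hn x
  exact (hrate n x).trans_lt hn

lemma continuous_of_tendsto [TopologicalSpace X] (hF : Continuous F) (hℓ : Continuous ℓ) :
    Continuous Φ :=
  (tendstoUniformly_of_tendsto hΦ hm hstep).continuous
    (Frequently.of_forall fun n => continuous_const.mul (hℓ.comp (hF.iterate n)))

lemma abs_sub_iterate_le_of_apply_eq {x x' : X} (h : Φ x = Φ x') (n : ℕ) :
    |ℓ (F^[n] x) - ℓ (F^[n] x')| ≤ 2 * C := by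
  have hm0 : m ≠ 0 := by rintro rfl; norm_num at hm
  have h' : Φ (F^[n] x) = Φ (F^[n] x') := by
    rw [apply_iterate_eq_pow_mul_of_tendsto hΦ hm0, apply_iterate_eq_pow_mul_of_tendsto hΦ hm0, h]
  have h₁ := abs_sub_le_of_tendsto hΦ hm hstep (F^[n] x)
  have h₂ := abs_sub_le_of_tendsto hΦ hm hstep (F^[n] x')
  rw [abs_le] at h₁ h₂ ⊢
  constructor <;> linarith

end Semiconj

section Cone

variable {E : Type*} [NormedAddCommGroup E] [NormedSpace ℝ E] {F : E → E} {S : Set E}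
  {ℓ : E → ℝ} {K : ℝ}

lemma exists_hasDerivAt_iterate_comp (hF : Differentiable ℝ F) (hK : 0 ≤ K)
    (hcone : ∀ z v, v ∈ S → fderiv ℝ F z v ∈ S ∧ K * |ℓ v| ≤ |ℓ (fderiv ℝ F z v)|)
    {γ γ' : ℝ → E} (hγ : ∀ t, HasDerivAt γ (γ' t) t) (hγS : ∀ t, γ' t ∈ S) (n : ℕ) :
    ∃ w : ℝ → E, ∀ t,
      HasDerivAt (F^[n] ∘ γ) (w t) t ∧ w t ∈ S ∧ K ^ n * |ℓ (γ' t)| ≤ |ℓ (w t)| := by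
  induction n with
  | zero => exact ⟨γ', fun t => ⟨hγ t, hγS t, by simp⟩⟩
  | succ n ih =>
    obtain ⟨w, hw⟩ := ih
    refine ⟨fun t => fderiv ℝ F ((F^[n] ∘ γ) t) (w t), fun t => ⟨?_, ?_, ?_⟩⟩
    · rw [iterate_succ', comp_assoc]
      exact (hF _).hasFDerivAt.comp_hasDerivAt t (hw t).1
    · exact (hcone _ _ (hw t).2.1).1
    · rw [pow_succ', mul_assoc]
      exact (mul_le_mul_of_nonneg_left (hw t).2.2 hK).trans (hcone _ _ (hw t).2.1).2

lemma pow_mul_le_abs_sub_iterate (hF : Differentiable ℝ F) (hK : 0 ≤ K) {ℓ : E →L[ℝ] ℝ}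
    (hcone : ∀ z v, v ∈ S → fderiv ℝ F z v ∈ S ∧ K * |ℓ v| ≤ |ℓ (fderiv ℝ F z v)|)
    {v : E} (hv : v ∈ S) (n : ℕ) (z : E) :
    K ^ n * |ℓ v| ≤ |ℓ (F^[n] (z + v)) - ℓ (F^[n] z)| := by
  have hγ : ∀ t : ℝ, HasDerivAt (fun t : ℝ => z + t • v) v t := fun t => by
    simpa using ((hasDerivAt_id t).smul_const v).const_add z
  obtain ⟨w, hw⟩ := exists_hasDerivAt_iterate_comp hF hK hcone hγ (fun _ => hv) n
  simpa using mul_sub_le_abs_sub_of_le_abs_deriv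
    (fun t => ℓ.hasFDerivAt.comp_hasDerivAt t (hw t).1) (fun t => (hw t).2.2) zero_lt_one

end Cone

section Coordinates

variable {d : ℕ} (hd : 0 < d) {R : Type*}

def consHead (x : R) (y : Fin (d - 1) → R) : Fin d → R :=
  fun i => if h : i.val = 0 then x else y ⟨i.val - 1, by omega⟩

lemma consHead_zero (x : R) (y : Fin (d - 1) → R) : consHead hd x y ⟨0, hd⟩ = x := by
  simp [consHead]

lemma consHead_one_add (x : R) (y : Fin (d - 1) → R) (j : Fin (d - 1)) :
    consHead hd x y ⟨1 + j.val, by omega⟩ = y j := by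
  simp [consHead]

lemma projQ_toEuc (v : Fin d → ℝ) :
    projQ d 1 hd (toEuc d v) = toEuc (d - 1) fun j => v ⟨1 + j.val, by omega⟩ := rfl

lemma projQ_add (z z' : EuclideanSpace ℝ (Fin d)) :
    projQ d 1 hd (z + z') = projQ d 1 hd z + projQ d 1 hd z' := rfl

def headTailEquiv : EuclideanSpace ℝ (Fin d) ≃L[ℝ] ℝ × EuclideanSpace ℝ (Fin (d - 1)) :=
  LinearEquiv.toContinuousLinearEquiv
    { toFun := fun z => (z ⟨0, hd⟩, projQ d 1 hd z)
      invFun := fun w => WithLp.toLp 2 (consHead hd w.1 w.2)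
      map_add' := fun _ _ => rfl
      map_smul' := fun _ _ => rfl
      left_inv := fun z => by
        ext i
        rcases i with ⟨_ | i, hi⟩
        · rfl
        · simp [consHead, projQ, add_comm 1 i]
      right_inv := fun w => Prod.ext (consHead_zero hd w.1 w.2) (by
        ext j
        exact consHead_one_add hd _ _ j) }

@[simp] lemma headTailEquiv_apply (z : EuclideanSpace ℝ (Fin d)) :
    headTailEquiv hd z = (z ⟨0, hd⟩, projQ d 1 hd z) := by
  rw [headTailEquiv, LinearEquiv.coe_toContinuousLinearEquiv']
  rfl

lemma exists_intVec_head_projQ_eq (k : ℤ) (q : Fin (d - 1) → ℤ) :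
    ∃ p : Fin d → ℤ, p ⟨0, hd⟩ = k ∧
      projQ d 1 hd (toEuc d fun i => (p i : ℝ)) = toEuc (d - 1) fun j => (q j : ℝ) :=
  ⟨consHead hd k q, consHead_zero hd k q, by simp only [projQ_toEuc, consHead_one_add]⟩

end Coordinates

section Lift

variable {d : ℕ} (hd : 0 < d) {M : Matrix (Fin d) (Fin d) ℝ}
  {G F : EuclideanSpace ℝ (Fin d) → EuclideanSpace ℝ (Fin d)} {m : ℤ}
  {Φ : EuclideanSpace ℝ (Fin d) → ℝ} {C α K : ℝ}
  (hMint : ∀ i j, ∃ n : ℤ, M i j = (n : ℝ)) (hGC1 : ContDiff ℝ 1 G) (hC : ∀ z, ‖G z‖ ≤ C)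
  (hGper : ∀ (z : EuclideanSpace ℝ (Fin d)) (p : Fin d → ℤ),
    G (z + toEuc d fun i => (p i : ℝ)) = G z)
  (hF : ∀ z, F z = toEuc d (M.mulVec z) + G z) (hm : 1 < |m|)
  (hPM : ∀ z : EuclideanSpace ℝ (Fin d),
    toEuc d (M.mulVec z) ⟨0, hd⟩ = (m : ℝ) * z ⟨0, hd⟩)
  (hα : 0 < α) (hK : 1 < K)
  (hcone : ∀ (z v : EuclideanSpace ℝ (Fin d)),
    ‖projQ d 1 hd v‖ ≤ α * |v ⟨0, hd⟩| →
      ‖projQ d 1 hd (fderiv ℝ F z v)‖ ≤ α * |(fderiv ℝ F z v) ⟨0, hd⟩| ∧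
      K * |v ⟨0, hd⟩| ≤ |(fderiv ℝ F z v) ⟨0, hd⟩|)
  (hΦ : ∀ z, Tendsto (fun n : ℕ => ((m : ℝ) ^ n)⁻¹ * (F^[n] z) ⟨0, hd⟩) atTop (𝓝 (Φ z)))

include hF hGC1 in
lemma contDiff_of_eq_mulVec_add : ContDiff ℝ 1 F := by
  rw [funext hF]
  exact (LinearMap.toContinuousLinearMap (Matrix.toEuclideanLin M)).contDiff.add hGC1

include hF hPM hC in
lemma abs_map_head_sub_le (z : EuclideanSpace ℝ (Fin d)) :
    |F z ⟨0, hd⟩ - m * z ⟨0, hd⟩| ≤ C := by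
  rw [hF, PiLp.add_apply, hPM, add_sub_cancel_left, ← Real.norm_eq_abs]
  exact (PiLp.norm_apply_le _ _).trans (hC z)

include hMint in
lemma exists_mulVec_intCast (p : Fin d → ℤ) :
    ∃ q : Fin d → ℤ, M.mulVec (fun i => (p i : ℝ)) = fun i => (q i : ℝ) := by
  choose N hN using hMint
  exact ⟨Matrix.mulVec (Matrix.of N) p, funext fun i => by simp [Matrix.mulVec, dotProduct, hN]⟩

include hMint hGper hF hPM in
lemma exists_map_add_intVec (z : EuclideanSpace ℝ (Fin d)) (p : Fin d → ℤ) :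
    ∃ q : Fin d → ℤ, q ⟨0, hd⟩ = m * p ⟨0, hd⟩ ∧
      F (z + toEuc d fun i => (p i : ℝ)) = F z + toEuc d fun i => (q i : ℝ) := by
  obtain ⟨q, hq⟩ := exists_mulVec_intCast hMint p
  refine ⟨q, ?_, ?_⟩
  · have h := hPM (toEuc d fun i => (p i : ℝ))
    simp only [toEuc, WithLp.ofLp_toLp, hq] at h
    exact_mod_cast h
  · rw [hF, hF, hGper, WithLp.ofLp_add, Matrix.mulVec_add, toEuc, toEuc, toEuc, WithLp.toLp_add]
    simp only [toEuc, hq]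
    abel

include hMint hGper hF hPM in
lemma exists_iterate_add_intVec (n : ℕ) (z : EuclideanSpace ℝ (Fin d)) (p : Fin d → ℤ) :
    ∃ q : Fin d → ℤ, (q ⟨0, hd⟩ : ℝ) = (m : ℝ) ^ n * p ⟨0, hd⟩ ∧
      F^[n] (z + toEuc d fun i => (p i : ℝ)) = F^[n] z + toEuc d fun i => (q i : ℝ) := by
  induction n with
  | zero => exact ⟨p, by simp, rfl⟩
  | succ n ih =>
    obtain ⟨q, hq0, hq⟩ := ih
    obtain ⟨q', hq'0, hq'⟩ := exists_map_add_intVec hd hMint hGper hF hPM (F^[n] z) q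
    refine ⟨q', ?_, ?_⟩
    · rw [hq'0, Int.cast_mul, hq0, pow_succ']
      ring
    · rw [iterate_succ_apply', iterate_succ_apply', hq, hq']

include hMint hGper hF hPM hm hΦ in
lemma apply_add_intVec (z : EuclideanSpace ℝ (Fin d)) (p : Fin d → ℤ) :
    Φ (z + toEuc d fun i => (p i : ℝ)) = Φ z + p ⟨0, hd⟩ := by
  refine apply_eq_add_of_tendsto (ℓ := EuclideanSpace.proj (⟨0, hd⟩ : Fin d)) hΦ
    (Int.cast_ne_zero.2 (by rintro rfl; simp at hm)) fun n => ?_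
  obtain ⟨q, hq0, hq⟩ := exists_iterate_add_intVec hd hMint hGper hF hPM n z p
  rw [hq, ← hq0]
  rfl

include hF hGC1 hC hPM hm hα hK hcone hΦ in
lemma eq_of_projQ_eq_of_apply_eq {x x' : EuclideanSpace ℝ (Fin d)}
    (hQ : projQ d 1 hd x = projQ d 1 hd x') (hΦx : Φ x = Φ x') : x = x' := by
  set v := x' - x
  have hQv : projQ d 1 hd v = 0 := by
    show projQ d 1 hd x' - projQ d 1 hd x = 0
    rw [hQ, sub_self]
  have hv0 : v ⟨0, hd⟩ = 0 := by
    refine eq_zero_of_forall_pow_mul_abs_le (B := 2 * C) hK fun n => ?_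
    have hexp := pow_mul_le_abs_sub_iterate (S := {v | ‖projQ d 1 hd v‖ ≤ α * |v ⟨0, hd⟩|})
      (ℓ := EuclideanSpace.proj ⟨0, hd⟩)
      ((contDiff_of_eq_mulVec_add hGC1 hF).differentiable one_ne_zero) (by linarith) hcone
      (v := v) (by simp only [Set.mem_ofPred_eq, hQv, norm_zero]; positivity) n x
    rw [add_sub_cancel] at hexp
    exact hexp.trans ((abs_sub_comm _ _).trans_le <| abs_sub_iterate_le_of_apply_eq
      (ℓ := EuclideanSpace.proj (⟨0, hd⟩ : Fin d)) hΦ (two_le_abs_intCast hm)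
      (abs_map_head_sub_le hd hC hF hPM) hΦx n)
  have hv : v = 0 := (headTailEquiv hd).injective <| by
    rw [headTailEquiv_apply, map_zero, hv0, hQv]
    rfl
  exact (sub_eq_zero.1 hv).symm

include hF hGC1 hC hPM hm hα hK hcone hΦ in
lemma exists_homeomorph_apply_eq :
    ∃ H : EuclideanSpace ℝ (Fin d) ≃ₜ ℝ × EuclideanSpace ℝ (Fin (d - 1)),
      ∀ z, H z = (Φ z, projQ d 1 hd z) := by
  have hΦC : ∀ z, |Φ z - z ⟨0, hd⟩| ≤ C := abs_sub_le_of_tendsto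
    (ℓ := EuclideanSpace.proj (⟨0, hd⟩ : Fin d)) hΦ (two_le_abs_intCast hm)
    (abs_map_head_sub_le hd hC hF hPM)
  have hΦcont : Continuous Φ := continuous_of_tendsto
    (ℓ := EuclideanSpace.proj (⟨0, hd⟩ : Fin d)) hΦ (two_le_abs_intCast hm)
    (abs_map_head_sub_le hd hC hF hPM) (contDiff_of_eq_mulVec_add hGC1 hF).continuous
    (EuclideanSpace.proj _).continuous
  simpa using exists_homeomorph_prod_of_injective (headTailEquiv hd).toHomeomorph hΦcont
    (by simpa using hΦC) fun x x' hQ => by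
      simpa using eq_of_projQ_eq_of_apply_eq hd hGC1 hC hF hm hPM hα hK hcone hΦ hQ

end Lift

section Torus

lemma exists_homeomorph_comp_eq {X Y A B : Type*} [TopologicalSpace X] [TopologicalSpace Y]
    [TopologicalSpace A] [TopologicalSpace B] {π : X → A} {ρ : Y → B} (hπ : IsQuotientMap π)
    (hρ : IsQuotientMap ρ) (H : X ≃ₜ Y) (hH : ∀ x x', π x = π x' ↔ ρ (H x) = ρ (H x')) :
    ∃ Hbar : A ≃ₜ B, ∀ x, Hbar (π x) = ρ (H x) := by
  set f : A → B := fun a => ρ (H (surjInv hπ.surjective a))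
  set g : B → A := fun b => π (H.symm (surjInv hρ.surjective b))
  have hf : ∀ x, f (π x) = ρ (H x) := fun x =>
    (hH _ _).1 (surjInv_eq hπ.surjective (π x))
  have hg : ∀ y, g (ρ y) = π (H.symm y) := fun y =>
    (hH _ _).2 (by simpa using surjInv_eq hρ.surjective (ρ y))
  refine ⟨{ toFun := f, invFun := g, left_inv := fun a => ?_, right_inv := fun b => ?_
            continuous_toFun := ?_, continuous_invFun := ?_ }, hf⟩
  · obtain ⟨x, rfl⟩ := hπ.surjective a
    simp [hf, hg]
  · obtain ⟨y, rfl⟩ := hρ.surjective b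
    simp [hf, hg]
  · have hfπ : f ∘ π = ρ ∘ H := funext hf
    exact hπ.continuous_iff.2 (hfπ ▸ hρ.continuous.comp H.continuous)
  · have hgρ : g ∘ ρ = π ∘ H.symm := funext hg
    exact hρ.continuous_iff.2 (hgρ ▸ hπ.continuous.comp H.symm.continuous)

lemma addCircle_coe_eq_coe_iff {x y : ℝ} :
    (x : AddCircle (1 : ℝ)) = y ↔ ∃ k : ℤ, y = x + k := by
  rw [QuotientAddGroup.eq, AddSubgroup.mem_zmultiples_iff]
  simp [neg_add_eq_sub, eq_comm, sub_eq_iff_eq_add']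

lemma torusProj_eq_torusProj_iff {n : ℕ} {z z' : EuclideanSpace ℝ (Fin n)} :
    torusProj n z = torusProj n z' ↔ ∃ p : Fin n → ℤ, z' = z + toEuc n fun i => (p i : ℝ) := by
  simp only [torusProj, funext_iff, addCircle_coe_eq_coe_iff]
  constructor
  · intro h
    choose p hp using h
    exact ⟨p, by ext i; exact hp i⟩
  · rintro ⟨p, rfl⟩ i
    exact ⟨p i, rfl⟩

lemma isOpenQuotientMap_torusProj (n : ℕ) : IsOpenQuotientMap (torusProj n) :=
  (IsOpenQuotientMap.piMap fun _ => QuotientAddGroup.isOpenQuotientMap_mk).comp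
    (PiLp.homeomorph 2 _).isOpenQuotientMap

lemma prodMap_torusProj_eq_iff {n : ℕ} {w w' : ℝ × EuclideanSpace ℝ (Fin n)} :
    Prod.map (↑) (torusProj n) w = Prod.map ((↑) : ℝ → AddCircle (1 : ℝ)) (torusProj n) w' ↔
      ∃ (k : ℤ) (q : Fin n → ℤ), w' = w + ((k : ℝ), toEuc n fun j => (q j : ℝ)) := by
  simp only [Prod.map, Prod.ext_iff, addCircle_coe_eq_coe_iff, torusProj_eq_torusProj_iff,
    Prod.fst_add, Prod.snd_add]
  exact ⟨fun ⟨⟨k, hk⟩, ⟨q, hq⟩⟩ => ⟨k, q, hk, hq⟩, fun ⟨k, q, hk, hq⟩ => ⟨⟨k, hk⟩, ⟨q, hq⟩⟩⟩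

variable {d : ℕ} (hd : 0 < d)

lemma exists_torus_map {F : EuclideanSpace ℝ (Fin d) → EuclideanSpace ℝ (Fin d)}
    (hF : ∀ z (p : Fin d → ℤ), ∃ q : Fin d → ℤ,
      F (z + toEuc d fun i => (p i : ℝ)) = F z + toEuc d fun i => (q i : ℝ)) :
    ∃ Fbar : (Fin d → AddCircle (1 : ℝ)) → (Fin d → AddCircle (1 : ℝ)),
      ∀ z, Fbar (torusProj d z) = torusProj d (F z) := by
  have hfac : FactorsThrough (torusProj d ∘ F) (torusProj d) := fun z z' h => by
    obtain ⟨p, rfl⟩ := torusProj_eq_torusProj_iff.1 h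
    obtain ⟨q, hq⟩ := hF z p
    exact torusProj_eq_torusProj_iff.2 ⟨q, hq⟩
  exact ⟨extend (torusProj d) (torusProj d ∘ F) id, hfac.extend_apply id⟩

lemma torusProj_eq_iff_of_add_intVec
    {H : EuclideanSpace ℝ (Fin d) → ℝ × EuclideanSpace ℝ (Fin (d - 1))} (hinj : Injective H)
    (hH : ∀ (z : EuclideanSpace ℝ (Fin d)) (p : Fin d → ℤ),
      H (z + toEuc d fun i => (p i : ℝ))
        = H z + ((p ⟨0, hd⟩ : ℝ), projQ d 1 hd (toEuc d fun i => (p i : ℝ))))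
    (z z' : EuclideanSpace ℝ (Fin d)) :
    torusProj d z = torusProj d z' ↔
      Prod.map (↑) (torusProj (d - 1)) (H z) =
        Prod.map ((↑) : ℝ → AddCircle (1 : ℝ)) (torusProj (d - 1)) (H z') := by
  rw [torusProj_eq_torusProj_iff, prodMap_torusProj_eq_iff]
  constructor
  · rintro ⟨p, rfl⟩
    exact ⟨p ⟨0, hd⟩, fun j => p ⟨1 + j.val, by omega⟩, hH z p⟩
  · rintro ⟨k, q, hkq⟩
    obtain ⟨p, hp0, hpQ⟩ := exists_intVec_head_projQ_eq hd k q
    exact ⟨p, hinj (by rw [hkq, hH, hp0, hpQ])⟩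

lemma exists_homeomorph_torus
    (H : EuclideanSpace ℝ (Fin d) ≃ₜ ℝ × EuclideanSpace ℝ (Fin (d - 1)))
    (hH : ∀ (z : EuclideanSpace ℝ (Fin d)) (p : Fin d → ℤ),
      H (z + toEuc d fun i => (p i : ℝ))
        = H z + ((p ⟨0, hd⟩ : ℝ), projQ d 1 hd (toEuc d fun i => (p i : ℝ)))) :
    ∃ Hbar : (Fin d → AddCircle (1 : ℝ)) ≃ₜ
        AddCircle (1 : ℝ) × (Fin (d - 1) → AddCircle (1 : ℝ)),
      ∀ z, Hbar (torusProj d z) = (((H z).1 : AddCircle (1 : ℝ)), torusProj (d - 1) (H z).2) :=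
  exists_homeomorph_comp_eq (isOpenQuotientMap_torusProj d).isQuotientMap
    (QuotientAddGroup.isOpenQuotientMap_mk.prodMap
      (isOpenQuotientMap_torusProj (d - 1))).isQuotientMap
    H (torusProj_eq_iff_of_add_intVec hd H.injective hH)

end Torus

/--
Let `F̂(z) = Mz + G(z)` be a C¹ lift of a torus map with `G` of class
C¹, satisfying the expanding-block assumption with `k = 1` (so `P(z) = z₁`,
`P∘M = m·P` for an integer `m` with `|m| > 1`), and admitting an invariant expanding cone
structure with constants `α > 0` and `K > 1` centered on the first coordinate direction.
Let `Φ̂(z) = lim_{n→∞} m^{−n} P(F̂ⁿ(z))` and define `Ĥ : ℝ^d → ℝ × ℝ^{d−1} ≅ ℝ^d` by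
`Ĥ(z) = (Φ̂(z), Qz)`. Then `Ĥ` is a homeomorphism of `ℝ^d`, it satisfies
`Ĥ(z + p) = Ĥ(z) + (p₁, Qp)` for all `p ∈ ℤ^d`, and the conjugated map `Ĥ∘F̂∘Ĥ⁻¹` has
the skew-product form `(x, y) ↦ (m·x, g(x,y))` for some continuous `g`. Hence the induced
torus map is topologically conjugate to a skew product over the expanding circle map
`x ↦ mx mod 1`.
-/
theorem stmt15 (d : ℕ) (hd : 0 < d)
    (M : Matrix (Fin d) (Fin d) ℝ) (hMint : ∀ i j, ∃ n : ℤ, M i j = (n : ℝ))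
    (G : EuclideanSpace ℝ (Fin d) → EuclideanSpace ℝ (Fin d))
    (hGC1 : ContDiff ℝ 1 G) (hGbdd : ∃ C, ∀ z, ‖G z‖ ≤ C)
    (hGper : ∀ (z : EuclideanSpace ℝ (Fin d)) (p : Fin d → ℤ),
      G (z + toEuc d fun i => (p i : ℝ)) = G z)
    (F : EuclideanSpace ℝ (Fin d) → EuclideanSpace ℝ (Fin d))
    (hF : ∀ z, F z = toEuc d (M.mulVec z) + G z)
    (m : ℤ) (hm : 1 < |m|)
    (hPM : ∀ z : EuclideanSpace ℝ (Fin d),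
      toEuc d (M.mulVec z) ⟨0, hd⟩ = (m : ℝ) * z ⟨0, hd⟩)
    (α K : ℝ) (hα : 0 < α) (hK : 1 < K)
    (hcone : ∀ (z v : EuclideanSpace ℝ (Fin d)),
      ‖projQ d 1 hd v‖ ≤ α * |v ⟨0, hd⟩| →
        ‖projQ d 1 hd (fderiv ℝ F z v)‖ ≤ α * |(fderiv ℝ F z v) ⟨0, hd⟩| ∧
        K * |v ⟨0, hd⟩| ≤ |(fderiv ℝ F z v) ⟨0, hd⟩|)
    (Φ : EuclideanSpace ℝ (Fin d) → ℝ)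
    (hΦ : ∀ z, Tendsto (fun n : ℕ => ((m : ℝ) ^ n)⁻¹ * (F^[n] z) ⟨0, hd⟩)
      atTop (𝓝 (Φ z)))
    :
    ∃ H : EuclideanSpace ℝ (Fin d) ≃ₜ (ℝ × EuclideanSpace ℝ (Fin (d - 1))),
      (∀ z, H z = (Φ z, projQ d 1 hd z)) ∧
      (∀ (z : EuclideanSpace ℝ (Fin d)) (p : Fin d → ℤ),
        H (z + toEuc d fun i => (p i : ℝ))
          = H z + ((p ⟨0, hd⟩ : ℝ), projQ d 1 hd (toEuc d fun i => (p i : ℝ)))) ∧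
      (∃ g : ℝ × EuclideanSpace ℝ (Fin (d - 1)) → EuclideanSpace ℝ (Fin (d - 1)),
        Continuous g ∧
        ∀ w : ℝ × EuclideanSpace ℝ (Fin (d - 1)),
          H (F (H.symm w)) = ((m : ℝ) * w.1, g w)) ∧
      -- hence the induced torus map is topologically conjugate to a skew product over
      -- the expanding circle map `x ↦ mx mod 1`:
      ∃ (Fbar : (Fin d → AddCircle (1 : ℝ)) → (Fin d → AddCircle (1 : ℝ)))
        (Hbar : (Fin d → AddCircle (1 : ℝ)) ≃ₜ
          (AddCircle (1 : ℝ) × (Fin (d - 1) → AddCircle (1 : ℝ))))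
        (gbar : AddCircle (1 : ℝ) × (Fin (d - 1) → AddCircle (1 : ℝ)) →
          (Fin (d - 1) → AddCircle (1 : ℝ))),
        (∀ z, Fbar (torusProj d z) = torusProj d (F z)) ∧
        (∀ z, Hbar (torusProj d z) = (((Φ z : ℝ) : AddCircle (1 : ℝ)),
          torusProj (d - 1) (projQ d 1 hd z))) ∧
        (∀ θ, Hbar (Fbar (Hbar.symm θ)) = (m • θ.1, gbar θ)) := by
  obtain ⟨C, hC⟩ := hGbdd
  have hΦF : ∀ z, Φ (F z) = m * Φ z := apply_map_eq_mul_of_tendsto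
    (ℓ := EuclideanSpace.proj (⟨0, hd⟩ : Fin d)) hΦ
    (Int.cast_ne_zero.2 (by rintro rfl; simp at hm))
  have hFcont : Continuous F := (contDiff_of_eq_mulVec_add hGC1 hF).continuous
  obtain ⟨H, hH⟩ := exists_homeomorph_apply_eq hd hGC1 hC hF hm hPM hα hK hcone hΦ
  have hHper : ∀ (z : EuclideanSpace ℝ (Fin d)) (p : Fin d → ℤ),
      H (z + toEuc d fun i => (p i : ℝ))
        = H z + ((p ⟨0, hd⟩ : ℝ), projQ d 1 hd (toEuc d fun i => (p i : ℝ))) := fun z p => by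
    rw [hH, hH, apply_add_intVec hd hMint hGper hF hm hPM hΦ, projQ_add]
    rfl
  obtain ⟨Fbar, hFbar⟩ := exists_torus_map fun z p =>
    (exists_map_add_intVec hd hMint hGper hF hPM z p).imp fun _ => And.right
  obtain ⟨Hbar, hHbar⟩ := exists_homeomorph_torus hd H hHper
  simp only [hH] at hHbar
  refine ⟨H, hH, hHper, ⟨fun w => (H (F (H.symm w))).2, by fun_prop, fun w => Prod.ext ?_ rfl⟩,
    Fbar, Hbar, fun θ => (Hbar (Fbar (Hbar.symm θ))).2, hFbar, hHbar, fun θ => Prod.ext ?_ rfl⟩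
  · rw [hH, hΦF, ← congrArg Prod.fst (H.apply_symm_apply w), hH]
  · obtain ⟨z, rfl⟩ := (Hbar.surjective.comp (isOpenQuotientMap_torusProj d).surjective) θ
    rw [comp_apply, Homeomorph.symm_apply_apply, hFbar, hHbar, hHbar, hΦF, ← zsmul_eq_mul,
      AddCircle.coe_zsmul]
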